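/- arXiv:1311.7584 — 2 statements merged into one kernel-verified Lean document; each statement's English description precedes it below -/
import Mathlib

section
/- Let U, V be random variables on a finite probability space and suppose Q is a random variable that is both a deterministic function of U and a deterministic function of V (almost surely). Then H(Q) ≤ I(U;V). -/
open scoped BigOperators

noncomputable section

/-- Probability that the random variable `X` takes the value `a`,
with respect to the probability mass function `p` on the finite sample space `Ω`. -/
def prob {Ω : Type*} [Fintype Ω] {α : Type*} [DecidableEq α]
    (p : Ω → ℝ) (X : Ω → α) (a : α) : ℝ :=
  ∑ ω, if X ω = a then p ω else 0

/-- Shannon entropy (base 2) of the random variable `X`. -/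
def ent {Ω : Type*} [Fintype Ω] {α : Type*} [Fintype α] [DecidableEq α]
    (p : Ω → ℝ) (X : Ω → α) : ℝ :=
  -∑ a, prob p X a * Real.logb 2 (prob p X a)

/-- Conditional entropy `H(X|Y)`. -/
def condEnt {Ω : Type*} [Fintype Ω] {α β : Type*} [Fintype α] [DecidableEq α]
    [Fintype β] [DecidableEq β] (p : Ω → ℝ) (X : Ω → α) (Y : Ω → β) : ℝ :=
  ent p (fun ω => (X ω, Y ω)) - ent p Y

/-- Mutual information `I(X;Y)`. -/
def mi {Ω : Type*} [Fintype Ω] {α β : Type*} [Fintype α] [DecidableEq α]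
    [Fintype β] [DecidableEq β] (p : Ω → ℝ) (X : Ω → α) (Y : Ω → β) : ℝ :=
  ent p X + ent p Y - ent p (fun ω => (X ω, Y ω))

/-- Conditional mutual information `I(X;Y|Z)`. -/
def cmi {Ω : Type*} [Fintype Ω] {α β γ : Type*} [Fintype α] [DecidableEq α]
    [Fintype β] [DecidableEq β] [Fintype γ] [DecidableEq γ]
    (p : Ω → ℝ) (X : Ω → α) (Y : Ω → β) (Z : Ω → γ) : ℝ :=
  ent p (fun ω => (X ω, Z ω)) + ent p (fun ω => (Y ω, Z ω))
    - ent p (fun ω => (X ω, Y ω, Z ω)) - ent p Z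

/-!
Since `Q` is almost surely a function of `U` and of `V`, adjoining `Q` changes none of
`H(U)`, `H(V)`, `H(U,V)`, so `I(U;V) - H(Q) = H(U,Q) + H(V,Q) - H(U,V,Q) - H(Q) = I(U;V|Q)`.
Conditional mutual information is nonnegative by Gibbs' inequality `log t ≤ t - 1`, applied to
the ratio `p(x,z) p(y,z) / (p(x,y,z) p(z))`, whose `p`-weighted sum is at most the total mass.
-/

open Finset Real

section
variable {Ω : Type*} [Fintype Ω] {α β γ : Type*} [DecidableEq α] [DecidableEq β] [DecidableEq γ]
  (p : Ω → ℝ)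

lemma prob_nonneg (hp : ∀ ω, 0 ≤ p ω) (X : Ω → α) (a : α) : 0 ≤ prob p X a :=
  sum_nonneg fun ω _ => by split_ifs <;> simp [hp ω]

lemma prob_pos_of_ne_zero (hp : ∀ ω, 0 ≤ p ω) (X : Ω → α) {ω : Ω} (hω : p ω ≠ 0) :
    0 < prob p X (X ω) :=
  calc 0 < p ω := (hp ω).lt_of_ne' hω
    _ ≤ prob p X (X ω) := by
      simpa [prob] using single_le_sum (f := fun ω' => if X ω' = X ω then p ω' else 0)
        (fun ω' _ => by split_ifs <;> simp [hp ω']) (mem_univ ω)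

lemma sum_prob_mul [Fintype α] (X : Ω → α) (φ : α → ℝ) :
    ∑ a, prob p X a * φ a = ∑ ω, p ω * φ (X ω) := by
  simp_rw [prob, sum_mul, ite_mul, zero_mul]
  rw [sum_comm]
  simp

lemma sum_prob [Fintype α] (X : Ω → α) : ∑ a, prob p X a = ∑ ω, p ω := by
  simpa using sum_prob_mul p X fun _ => 1

lemma sum_prob_pair_left [Fintype α] (X : Ω → α) (Z : Ω → γ) (c : γ) :
    ∑ a, prob p (fun ω => (X ω, Z ω)) (a, c) = prob p Z c := by
  simp_rw [prob, Prod.mk.injEq, ite_and]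
  rw [sum_comm]
  simp

lemma ent_eq_sum [Fintype α] (X : Ω → α) :
    ent p X = -∑ ω, p ω * logb 2 (prob p X (X ω)) := by
  rw [ent, sum_prob_mul]

lemma ent_eq_of_ae_same_fibers [Fintype α] [Fintype β] (X : Ω → α) (Y : Ω → β)
    (h : ∀ ω ω', p ω ≠ 0 → p ω' ≠ 0 → (X ω' = X ω ↔ Y ω' = Y ω)) : ent p X = ent p Y := by
  have hprob (ω : Ω) (hω : p ω ≠ 0) : prob p X (X ω) = prob p Y (Y ω) :=
    sum_congr rfl fun ω' _ => by
      by_cases hω' : p ω' = 0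
      · simp [hω']
      · simp only [h ω ω' hω hω']
  rw [ent_eq_sum, ent_eq_sum]
  congr 1
  refine sum_congr rfl fun ω _ => ?_
  by_cases hω : p ω = 0
  · simp [hω]
  · rw [hprob ω hω]

lemma sum_mul_logb_nonpos_of_sum_mul_le (hp : ∀ ω, 0 ≤ p ω) (r : Ω → ℝ)
    (hr : ∀ ω, p ω ≠ 0 → 0 < r ω) (h : ∑ ω, p ω * r ω ≤ ∑ ω, p ω) :
    ∑ ω, p ω * logb 2 (r ω) ≤ 0 := by
  have hlog2 : 0 < log 2 := log_pos one_lt_two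
  have hterm (ω : Ω) : p ω * logb 2 (r ω) ≤ (p ω * r ω - p ω) / log 2 := by
    by_cases hω : p ω = 0
    · simp [hω]
    · rw [logb, ← mul_div_assoc, div_le_div_iff_of_pos_right hlog2]
      nlinarith [mul_le_mul_of_nonneg_left (log_le_sub_one_of_pos (hr ω hω)) (hp ω)]
  calc ∑ ω, p ω * logb 2 (r ω) ≤ ∑ ω, (p ω * r ω - p ω) / log 2 := sum_le_sum fun ω _ => hterm ω
    _ = (∑ ω, p ω * r ω - ∑ ω, p ω) / log 2 := by rw [← sum_div, sum_sub_distrib]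
    _ ≤ 0 := div_nonpos_of_nonpos_of_nonneg (by linarith) hlog2.le

end

section
variable {Ω : Type*} [Fintype Ω] {α β γ : Type*} [Fintype α] [DecidableEq α] [Fintype β]
  [DecidableEq β] [Fintype γ] [DecidableEq γ] (p : Ω → ℝ)

lemma sum_mul_condIndep_ratio_le (hp : ∀ ω, 0 ≤ p ω) (X : Ω → α) (Y : Ω → β) (Z : Ω → γ) :
    ∑ ω, p ω * (prob p (fun ω => (X ω, Z ω)) (X ω, Z ω) * prob p (fun ω => (Y ω, Z ω)) (Y ω, Z ω)
      / (prob p (fun ω => (X ω, Y ω, Z ω)) (X ω, Y ω, Z ω) * prob p Z (Z ω))) ≤ ∑ ω, p ω := by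
  set PXZ := prob p fun ω => (X ω, Z ω)
  set PYZ := prob p fun ω => (Y ω, Z ω)
  set PXYZ := prob p fun ω => (X ω, Y ω, Z ω)
  set PZ := prob p Z
  calc _ = ∑ t : α × β × γ,
        PXYZ t * (PXZ (t.1, t.2.2) * PYZ (t.2.1, t.2.2) / (PXYZ t * PZ t.2.2)) :=
        (sum_prob_mul p _ fun t => PXZ (t.1, t.2.2) * PYZ (t.2.1, t.2.2) / (PXYZ t * PZ t.2.2)).symm
    _ ≤ ∑ t : α × β × γ, PXZ (t.1, t.2.2) * PYZ (t.2.1, t.2.2) / PZ t.2.2 := by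
        refine sum_le_sum fun t _ => ?_
        by_cases ht : PXYZ t = 0
        · rw [ht, zero_mul]
          exact div_nonneg (mul_nonneg (prob_nonneg p hp _ _) (prob_nonneg p hp _ _))
            (prob_nonneg p hp _ _)
        · rw [← mul_div_assoc, mul_div_mul_left _ _ ht]
    _ = ∑ c, (∑ a, PXZ (a, c)) * (∑ b, PYZ (b, c)) / PZ c := by
        simp_rw [sum_mul_sum, sum_div, Fintype.sum_prod_type]
        exact (sum_congr rfl fun _ _ => sum_comm).trans sum_comm
    _ = ∑ ω, p ω := by
        refine (sum_congr rfl fun c _ => ?_).trans (sum_prob p Z)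
        rw [sum_prob_pair_left p X Z c, sum_prob_pair_left p Y Z c, mul_self_div_self]

theorem cmi_nonneg (hp : ∀ ω, 0 ≤ p ω) (X : Ω → α) (Y : Ω → β) (Z : Ω → γ) :
    0 ≤ cmi p X Y Z := by
  set PXZ := prob p fun ω => (X ω, Z ω)
  set PYZ := prob p fun ω => (Y ω, Z ω)
  set PXYZ := prob p fun ω => (X ω, Y ω, Z ω)
  set PZ := prob p Z
  set r := fun ω => PXZ (X ω, Z ω) * PYZ (Y ω, Z ω) / (PXYZ (X ω, Y ω, Z ω) * PZ (Z ω))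
  have hr (ω : Ω) (hω : p ω ≠ 0) : 0 < r ω :=
    div_pos (mul_pos (prob_pos_of_ne_zero p hp _ hω) (prob_pos_of_ne_zero p hp _ hω))
      (mul_pos (prob_pos_of_ne_zero p hp _ hω) (prob_pos_of_ne_zero p hp _ hω))
  have hterm (ω : Ω) : p ω * logb 2 (r ω) = p ω * (logb 2 (PXZ (X ω, Z ω))
      + logb 2 (PYZ (Y ω, Z ω)) - logb 2 (PXYZ (X ω, Y ω, Z ω)) - logb 2 (PZ (Z ω))) := by
    by_cases hω : p ω = 0
    · simp [hω]
    · have h1 : 0 < PXZ (X ω, Z ω) := prob_pos_of_ne_zero p hp _ hω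
      have h2 : 0 < PYZ (Y ω, Z ω) := prob_pos_of_ne_zero p hp _ hω
      have h3 : 0 < PXYZ (X ω, Y ω, Z ω) := prob_pos_of_ne_zero p hp _ hω
      have h4 : 0 < PZ (Z ω) := prob_pos_of_ne_zero p hp _ hω
      rw [logb_div (by positivity) (by positivity), logb_mul h1.ne' h2.ne',
        logb_mul h3.ne' h4.ne']
      ring
  have hcmi : cmi p X Y Z = -∑ ω, p ω * logb 2 (r ω) := by
    simp_rw [cmi, ent_eq_sum, hterm, mul_sub, mul_add, sum_sub_distrib, sum_add_distrib]
    ring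
  have := sum_mul_logb_nonpos_of_sum_mul_le p hp r hr (sum_mul_condIndep_ratio_le p hp X Y Z)
  linarith

end

theorem stmt1_general {Ω : Type*} [Fintype Ω] {α β γ : Type*}
    [Fintype α] [DecidableEq α] [Fintype β] [DecidableEq β] [Fintype γ] [DecidableEq γ]
    (p : Ω → ℝ) (hp : ∀ ω, 0 ≤ p ω)
    (U : Ω → α) (V : Ω → β) (Q : Ω → γ)
    (f : α → γ) (hf : ∀ ω, p ω ≠ 0 → Q ω = f (U ω))
    (g : β → γ) (hg : ∀ ω, p ω ≠ 0 → Q ω = g (V ω)) :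
    ent p Q ≤ mi p U V := by
  have hUQ : ent p (fun ω => (U ω, Q ω)) = ent p U :=
    ent_eq_of_ae_same_fibers p _ _ fun ω ω' hω hω' => by
      simp only [Prod.mk.injEq, hf ω hω, hf ω' hω']
      grind
  have hVQ : ent p (fun ω => (V ω, Q ω)) = ent p V :=
    ent_eq_of_ae_same_fibers p _ _ fun ω ω' hω hω' => by
      simp only [Prod.mk.injEq, hg ω hω, hg ω' hω']
      grind
  have hUVQ : ent p (fun ω => (U ω, V ω, Q ω)) = ent p (fun ω => (U ω, V ω)) :=
    ent_eq_of_ae_same_fibers p _ _ fun ω ω' hω hω' => by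
      simp only [Prod.mk.injEq, hf ω hω, hf ω' hω']
      grind
  have hcmi := cmi_nonneg p hp U V Q
  rw [cmi, hUQ, hVQ, hUVQ] at hcmi
  rw [mi]
  linarith

theorem stmt1 {Ω : Type*} [Fintype Ω] {α β γ : Type*}
    [Fintype α] [DecidableEq α] [Fintype β] [DecidableEq β] [Fintype γ] [DecidableEq γ]
    (p : Ω → ℝ) (hp : ∀ ω, 0 ≤ p ω) (hsum : ∑ ω, p ω = 1)
    (U : Ω → α) (V : Ω → β) (Q : Ω → γ)
    (f : α → γ) (hf : ∀ ω, p ω ≠ 0 → Q ω = f (U ω))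
    (g : β → γ) (hg : ∀ ω, p ω ≠ 0 → Q ω = g (V ω)) :
    ent p Q ≤ mi p U V :=
  stmt1_general p hp U V Q f hf g hg
end
end

section
/- There exist random variables X, Y, Z, M₁₂, M₂₃, M₃₁ on a discrete probability space such that: X and Y are independent uniform bits; Z = X ∧ Y; each of M₁₂, M₂₃, M₃₁ takes values in a 3-element set; the correctness conditions H(X|M₁₂,M₃₁) = H(Y|M₁₂,M₂₃) = H(Z|M₂₃,M₃₁) = 0 hold; the privacy conditions I(M₁₂,M₃₁; Y,Z | X) = I(M₁₂,M₂₃; X,Z | Y) = I(M₂₃,M₃₁; X,Y | Z) = 0 hold; and H(M₁₂) = H(M₂₃) = H(M₃₁) = log 3. -/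
/-! Correctness: each party's secret is the equality test of the two messages it sees,
`X = [M₁₂ = M₃₁]`, `Y = [M₁₂ = M₂₃]`, `Z = [M₂₃ = M₃₁]`, and a variable that is a function of
another has zero conditional entropy. Privacy: `I(A;B|C) = 0` as soon as
`P(a,b,c) P(c) = P(a,c) P(b,c)`, since then the four logarithms in the entropy expansion cancel
pointwise; for the uniform measure this is an identity between fibre sizes, checked by evaluation
over the 24 outcomes, as is the uniformity of each message on `Fin 3`. -/

open scoped BigOperators

noncomputable section

open Finset

section Entropy

variable {Ω α β γ : Type*} [Fintype Ω] (p : Ω → ℝ)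

theorem ent_eq_neg_sum_mul_logb_prob_apply [Fintype α] [DecidableEq α] (X : Ω → α) :
    ent p X = -∑ ω, p ω * Real.logb 2 (prob p X (X ω)) := by
  unfold ent
  congr 1
  calc ∑ a, prob p X a * Real.logb 2 (prob p X a)
      = ∑ a, ∑ ω, if X ω = a then p ω * Real.logb 2 (prob p X a) else 0 := by
        simp only [prob, sum_mul, ite_mul, zero_mul]
    _ = ∑ ω, p ω * Real.logb 2 (prob p X (X ω)) := by
        rw [sum_comm]; simp only [sum_ite_eq, mem_univ, if_true]

theorem prob_apply_congr [DecidableEq α] [DecidableEq β] {X : Ω → α} {Y : Ω → β} {ω : Ω}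
    (h : ∀ ω', X ω' = X ω ↔ Y ω' = Y ω) : prob p X (X ω) = prob p Y (Y ω) := by
  simp only [prob, h]

theorem ent_congr_of_fibers [Fintype α] [DecidableEq α] [Fintype β] [DecidableEq β]
    {X : Ω → α} {Y : Ω → β} (h : ∀ ω ω', X ω' = X ω ↔ Y ω' = Y ω) : ent p X = ent p Y := by
  simp only [ent_eq_neg_sum_mul_logb_prob_apply, prob_apply_congr p (h _)]

theorem condEnt_eq_zero_of_eq_comp [Fintype α] [DecidableEq α] [Fintype β] [DecidableEq β]
    {X : Ω → α} {Y : Ω → β} (f : β → α) (h : ∀ ω, X ω = f (Y ω)) : condEnt p X Y = 0 :=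
  sub_eq_zero.2 <| ent_congr_of_fibers p fun ω ω' => by
    simp only [h, Prod.mk.injEq, and_iff_right_iff_imp]
    exact congrArg f

variable {p}

theorem prob_apply_pos [DecidableEq α] (hp : ∀ ω, 0 ≤ p ω) (X : Ω → α) {ω : Ω} (hω : 0 < p ω) :
    0 < prob p X (X ω) :=
  hω.trans_le <| by
    unfold prob
    simpa using single_le_sum (f := fun ω' => if X ω' = X ω then p ω' else 0)
      (fun ω' _ => by split_ifs <;> simp [hp]) (mem_univ ω)

theorem cmi_eq_zero_of_condIndep [Fintype α] [DecidableEq α] [Fintype β] [DecidableEq β]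
    [Fintype γ] [DecidableEq γ] (hp : ∀ ω, 0 ≤ p ω) {A : Ω → α} {B : Ω → β} {C : Ω → γ}
    (h : ∀ a b c, prob p (fun ω => (A ω, B ω, C ω)) (a, b, c) * prob p C c
      = prob p (fun ω => (A ω, C ω)) (a, c) * prob p (fun ω => (B ω, C ω)) (b, c)) :
    cmi p A B C = 0 := by
  have hterm : ∀ ω, p ω * (Real.logb 2 (prob p (fun ω => (A ω, C ω)) (A ω, C ω))
      + Real.logb 2 (prob p (fun ω => (B ω, C ω)) (B ω, C ω))
      - Real.logb 2 (prob p (fun ω => (A ω, B ω, C ω)) (A ω, B ω, C ω))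
      - Real.logb 2 (prob p C (C ω))) = 0 := by
    intro ω
    rcases (hp ω).eq_or_lt with hω | hω
    · rw [← hω, zero_mul]
    have hAC : prob p (fun ω => (A ω, C ω)) (A ω, C ω) ≠ 0 := (prob_apply_pos hp _ hω).ne'
    have hBC : prob p (fun ω => (B ω, C ω)) (B ω, C ω) ≠ 0 := (prob_apply_pos hp _ hω).ne'
    have hABC : prob p (fun ω => (A ω, B ω, C ω)) (A ω, B ω, C ω) ≠ 0 :=
      (prob_apply_pos hp _ hω).ne'
    have hC : prob p C (C ω) ≠ 0 := (prob_apply_pos hp _ hω).ne'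
    rw [sub_sub, ← Real.logb_mul hAC hBC, ← Real.logb_mul hABC hC, h, sub_self, mul_zero]
  have hsum := sum_eq_zero (s := univ) fun ω _ => hterm ω
  simp only [mul_add, mul_sub, sum_add_distrib, sum_sub_distrib] at hsum
  simp only [cmi, ent_eq_neg_sum_mul_logb_prob_apply]
  linarith

end Entropy

section Uniform

variable {Ω α β γ : Type*} [Fintype Ω]

theorem prob_uniform [DecidableEq α] (X : Ω → α) (a : α) :
    prob (fun _ => 1 / (Fintype.card Ω : ℝ)) X a
      = #{ω | X ω = a} / Fintype.card Ω := by
  simp [prob, sum_ite, div_eq_mul_inv]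

theorem ent_eq_logb_card_of_prob_eq [Fintype α] [DecidableEq α] {p : Ω → ℝ} {X : Ω → α}
    (h : ∀ a, prob p X a = 1 / Fintype.card α) : ent p X = Real.logb 2 (Fintype.card α) := by
  rcases (Fintype.card α).eq_zero_or_pos with hα | hα
  · simp [ent, Fintype.card_eq_zero_iff.1 hα]
  simp only [ent, h, sum_const, card_univ, nsmul_eq_mul, one_div, Real.logb_inv]
  field_simp

theorem cmi_uniform_eq_zero_of_card [Fintype α] [DecidableEq α] [Fintype β] [DecidableEq β]
    [Fintype γ] [DecidableEq γ] {A : Ω → α} {B : Ω → β} {C : Ω → γ}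
    (h : ∀ a b c, #{ω | (A ω, B ω, C ω) = (a, b, c)} * #{ω | C ω = c}
      = #{ω | (A ω, C ω) = (a, c)} * #{ω | (B ω, C ω) = (b, c)}) :
    cmi (fun _ => 1 / (Fintype.card Ω : ℝ)) A B C = 0 := by
  refine cmi_eq_zero_of_condIndep (fun _ => by positivity) fun a b c => ?_
  simp only [prob_uniform, div_mul_div_comm, ← Nat.cast_mul, h a b c]

end Uniform

namespace AndSharing

/-- `(α, α + d, α - d)` with `d = 1` or `d = 2` runs once through each permutation of `Fin 3`,
so a uniform outcome consists of two independent uniform bits and an independent uniform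
permutation `(α, β, γ)`. -/
abbrev Outcome := Bool × Bool × Fin 3 × Bool

def x (ω : Outcome) : Bool := ω.1
def y (ω : Outcome) : Bool := ω.2.1
def alpha (ω : Outcome) : Fin 3 := ω.2.2.1
def shift (ω : Outcome) : Fin 3 := if ω.2.2.2 then 1 else 2
def beta (ω : Outcome) : Fin 3 := alpha ω + shift ω
def gamma (ω : Outcome) : Fin 3 := alpha ω - shift ω

def m12 (ω : Outcome) : Fin 3 := alpha ω
def m31 (ω : Outcome) : Fin 3 := if x ω then alpha ω else beta ω
def m23 (ω : Outcome) : Fin 3 := if y ω then alpha ω else gamma ω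

def uniform : Outcome → ℝ := fun _ => 1 / (Fintype.card Outcome : ℝ)

theorem sum_uniform : ∑ ω, uniform ω = 1 := by
  simp [uniform]

theorem prob_x_y_eq (a b : Bool) : prob uniform (fun ω => (x ω, y ω)) (a, b) = 1 / 4 := by
  have hcard : #{ω | (x ω, y ω) = (a, b)} = 6 := by revert a b; decide
  unfold uniform
  rw [prob_uniform, hcard]
  norm_num [show Fintype.card Outcome = 24 from rfl]

theorem ent_eq_logb_three {M : Outcome → Fin 3} (hM : ∀ a, #{ω | M ω = a} = 8) :
    ent uniform M = Real.logb 2 3 := by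
  convert ent_eq_logb_card_of_prob_eq fun a => ?_
  · simp
  unfold uniform
  rw [prob_uniform, hM]
  norm_num [show Fintype.card Outcome = 24 from rfl]

theorem x_eq_decide (ω : Outcome) : x ω = decide (m12 ω = m31 ω) := by
  revert ω; decide

theorem y_eq_decide (ω : Outcome) : y ω = decide (m12 ω = m23 ω) := by
  revert ω; decide

theorem x_and_y_eq_decide (ω : Outcome) : (x ω && y ω) = decide (m23 ω = m31 ω) := by
  revert ω; decide

end AndSharing

open AndSharing in
theorem stmt17 : ∃ (Ω : Type) (_ : Fintype Ω) (p : Ω → ℝ)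
    (X Y Z : Ω → Bool) (M12 M23 M31 : Ω → Fin 3),
    (∀ ω, 0 ≤ p ω) ∧ (∑ ω, p ω = 1) ∧
    (∀ a b, prob p (fun ω => (X ω, Y ω)) (a, b) = 1/4) ∧
    (∀ ω, Z ω = (X ω && Y ω)) ∧
    condEnt p X (fun ω => (M12 ω, M31 ω)) = 0 ∧
    condEnt p Y (fun ω => (M12 ω, M23 ω)) = 0 ∧
    condEnt p Z (fun ω => (M23 ω, M31 ω)) = 0 ∧
    cmi p (fun ω => (M12 ω, M31 ω)) (fun ω => (Y ω, Z ω)) X = 0 ∧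
    cmi p (fun ω => (M12 ω, M23 ω)) (fun ω => (X ω, Z ω)) Y = 0 ∧
    cmi p (fun ω => (M23 ω, M31 ω)) (fun ω => (X ω, Y ω)) Z = 0 ∧
    ent p M12 = Real.logb 2 3 ∧ ent p M23 = Real.logb 2 3 ∧
    ent p M31 = Real.logb 2 3 := by
  refine ⟨Outcome, inferInstance, uniform, x, y, fun ω => x ω && y ω, m12, m23, m31,
    fun _ => by unfold uniform; positivity, sum_uniform, prob_x_y_eq, fun _ => rfl,
    condEnt_eq_zero_of_eq_comp _ (fun m => decide (m.1 = m.2)) x_eq_decide,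
    condEnt_eq_zero_of_eq_comp _ (fun m => decide (m.1 = m.2)) y_eq_decide,
    condEnt_eq_zero_of_eq_comp _ (fun m => decide (m.1 = m.2)) x_and_y_eq_decide,
    cmi_uniform_eq_zero_of_card (by decide), cmi_uniform_eq_zero_of_card (by decide),
    cmi_uniform_eq_zero_of_card (by decide),
    ent_eq_logb_three (by decide), ent_eq_logb_three (by decide), ent_eq_logb_three (by decide)⟩
end
end
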